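/- arXiv:1908.00933 — 2 statements merged into one kernel-verified Lean document; each statement's English description precedes it below -/
import Mathlib

section
/- (Duality formula) For every Borel set E ⊆ ℙ^n, 1/√(γ(E)) = sup{ ν(E) : ν a positive Borel measure on ℙ^n with supp ν ⊆ E and I(ν,ν) ≤ 1 }, where 1/√(+∞) := 0 and γ(E) = −log κ(E). In particular, E is κ-polar if and only if ν(E) = 0 for every positive Borel measure ν on ℙ^n with I(ν,ν) < +∞ and supp ν ⊆ E. -/
open MeasureTheory Filter Topology ENNReal

noncomputable section

/-- Complex projective space ℙⁿ, the projectivization of ℂ^{n+1}. -/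
abbrev Pn (n : ℕ) : Type := Projectivization ℂ (EuclideanSpace ℂ (Fin (n + 1)))

instance (n : ℕ) : TopologicalSpace (Pn n) := instTopologicalSpaceQuotient
instance (n : ℕ) : MeasurableSpace (Pn n) := borel _
instance (n : ℕ) : BorelSpace (Pn n) := ⟨rfl⟩

variable {n : ℕ}

/-- The quantity |ζ∧η| / (|ζ||η|) ∈ [0,1], computed on (arbitrary) representatives,
where |ζ∧η|² = |ζ|²|η|² − |⟨ζ,η⟩|². -/
def pratio (x y : Pn n) : ℝ :=
  Real.sqrt (‖x.rep‖ ^ 2 * ‖y.rep‖ ^ 2 - ‖(inner ℂ x.rep y.rep : ℂ)‖ ^ 2) /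
    (‖x.rep‖ * ‖y.rep‖)

/-- −G(ζ,η) ∈ [0,+∞], where G(ζ,η) = log (|ζ∧η| / (|ζ||η|)) is the projective
logarithmic kernel. -/
def negG (x y : Pn n) : ℝ≥0∞ :=
  if pratio x y = 0 then ∞ else ENNReal.ofReal (-Real.log (pratio x y))

/-- The projective logarithmic potential G_μ(ζ) = ∫ G(ζ,η) dμ(η) ∈ [−∞,0]. -/
def potential (μ : Measure (Pn n)) (x : Pn n) : EReal :=
  -((∫⁻ y, negG x y ∂μ : ℝ≥0∞) : EReal)

/-- The mutual projective logarithmic energy I(μ,ν) = −∬ G(ζ,η) dμ(η) dν(ζ) ∈ [0,+∞]. -/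
def mutEnergy (μ ν : Measure (Pn n)) : ℝ≥0∞ :=
  ∫⁻ x, ∫⁻ y, negG x y ∂μ ∂ν

/-- The projective logarithmic energy I(μ) = −∬ G(ζ,η) dμ(η) dμ(ζ) ∈ [0,+∞]. -/
def energy (μ : Measure (Pn n)) : ℝ≥0∞ := mutEnergy μ μ

/-- The (closed) support of a Borel measure. -/
def msupport (μ : Measure (Pn n)) : Set (Pn n) :=
  {x | ∀ U : Set (Pn n), IsOpen U → x ∈ U → μ U ≠ 0}

/-- The Robin constant γ(E) = inf { I(μ) : μ probability measure, supp μ ⊆ E }. -/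
def robin (E : Set (Pn n)) : ℝ≥0∞ :=
  ⨅ (μ : Measure (Pn n)) (_ : IsProbabilityMeasure μ) (_ : msupport μ ⊆ E), energy μ

/-- The projective logarithmic capacity κ(E) = e^{−γ(E)}. -/
def kappa (E : Set (Pn n)) : ℝ≥0∞ := EReal.exp (-(robin E : EReal))

/-- A set is κ-polar if every probability measure supported in it has infinite energy. -/
def IsPolar (E : Set (Pn n)) : Prop :=
  ∀ μ : Measure (Pn n), IsProbabilityMeasure μ → msupport μ ⊆ E → energy μ = ∞

/-- Weak convergence of a sequence of measures: convergence of the integrals of all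
continuous real functions. -/
def WeakTendsto (μs : ℕ → Measure (Pn n)) (μ : Measure (Pn n)) : Prop :=
  ∀ f : C(Pn n, ℝ), Tendsto (fun j => ∫ x, f x ∂(μs j)) atTop (𝓝 (∫ x, f x ∂μ))

/-- The Fubini–Study geodesic distance, determined by sin (d(ζ,η)/√2) = |ζ∧η|/(|ζ||η|). -/
def gd (x y : Pn n) : ℝ := Real.sqrt 2 * Real.arcsin (pratio x y)


/-!
Both sides of the duality formula are governed by scaling: `I(cμ, cμ) = c² I(μ, μ)`, and a
measure supported in `E` is carried by `E`, because `ℙⁿ` is second countable and so the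
complement of the support is null. Writing `ν = m • μ` with `μ` a probability measure turns the
constraint `I(ν, ν) ≤ 1` into `m ≤ I(μ, μ) ^ (-1/2)` and gives `ν(E) = m`.

The one analytic input is that finite energy forces finite mass. The chordal quantity
`|ζ∧η| / (|ζ||η|)` is, up to `√2`, the distance between the rank-one projections `ζζ*/|ζ|²`, so
it satisfies the triangle inequality and `ℙⁿ` is covered by finitely many sets on which
`-G ≥ log 2`; a set of mass `M` on which `-G ≥ log 2` contributes at least `M² log 2` to the
energy.
-/
open ComplexConjugate InnerProductSpace

section WedgeRatio

variable {V : Type*} [NormedAddCommGroup V] [InnerProductSpace ℂ V]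

def wedgeRatio (v w : V) : ℝ :=
  √(‖v‖ ^ 2 * ‖w‖ ^ 2 - ‖⟪v, w⟫_ℂ‖ ^ 2) / (‖v‖ * ‖w‖)

theorem wedgeRatio_comm (v w : V) : wedgeRatio v w = wedgeRatio w v := by
  rw [wedgeRatio, wedgeRatio, ← norm_inner_symm, mul_comm ‖v‖, mul_comm (‖v‖ ^ 2)]

theorem wedgeRatio_smul_left {c : ℂ} (hc : c ≠ 0) (v w : V) :
    wedgeRatio (c • v) w = wedgeRatio v w := by
  have hc' : 0 < ‖c‖ := norm_pos_iff.2 hc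
  rw [wedgeRatio, wedgeRatio, norm_smul, inner_smul_left, norm_mul, RCLike.norm_conj,
    show (‖c‖ * ‖v‖) ^ 2 * ‖w‖ ^ 2 - (‖c‖ * ‖⟪v, w⟫_ℂ‖) ^ 2
      = ‖c‖ ^ 2 * (‖v‖ ^ 2 * ‖w‖ ^ 2 - ‖⟪v, w⟫_ℂ‖ ^ 2) by ring,
    Real.sqrt_mul (sq_nonneg _), Real.sqrt_sq hc'.le, mul_assoc, mul_div_mul_left _ _ hc'.ne']

theorem wedgeRatio_smul_right {c : ℂ} (hc : c ≠ 0) (v w : V) :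
    wedgeRatio v (c • w) = wedgeRatio v w := by
  rw [wedgeRatio_comm, wedgeRatio_smul_left hc, wedgeRatio_comm]

theorem wedgeRatio_of_norm_eq_one {u v : V} (hu : ‖u‖ = 1) (hv : ‖v‖ = 1) :
    wedgeRatio u v = √(1 - ‖⟪u, v⟫_ℂ‖ ^ 2) := by
  simp [wedgeRatio, hu, hv]

theorem continuous_wedgeRatio_left {w : V} (hw : w ≠ 0) :
    Continuous fun v : {v : V // v ≠ 0} => wedgeRatio (v : V) w := by
  refine Continuous.div (by fun_prop) (by fun_prop) fun v => ?_
  exact mul_ne_zero (norm_ne_zero_iff.2 v.2) (norm_ne_zero_iff.2 hw)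

end WedgeRatio

section RankOneProj

variable {ι : Type*} [Fintype ι]

/-- The matrix `u uᴴ`, an isometric (up to `√2`) model of the Fubini–Study chordal distance. -/
def rankOneProj (u : EuclideanSpace ℂ ι) : EuclideanSpace ℂ (ι × ι) :=
  WithLp.toLp 2 fun p => u p.1 * conj (u p.2)

theorem inner_rankOneProj (u v : EuclideanSpace ℂ ι) :
    ⟪rankOneProj u, rankOneProj v⟫_ℂ = ⟪u, v⟫_ℂ * conj ⟪u, v⟫_ℂ := by
  simp only [rankOneProj, PiLp.inner_apply, RCLike.inner_apply, map_sum, Finset.sum_mul_sum,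
    Fintype.sum_prod_type]
  refine Finset.sum_congr rfl fun i _ => Finset.sum_congr rfl fun j _ => ?_
  simp only [map_mul, Complex.conj_conj]
  ring

theorem re_inner_rankOneProj (u v : EuclideanSpace ℂ ι) :
    RCLike.re ⟪rankOneProj u, rankOneProj v⟫_ℂ = ‖⟪u, v⟫_ℂ‖ ^ 2 := by
  rw [inner_rankOneProj, Complex.mul_conj, Complex.normSq_eq_norm_sq]
  exact Complex.ofReal_re _

theorem norm_rankOneProj (u : EuclideanSpace ℂ ι) : ‖rankOneProj u‖ = ‖u‖ ^ 2 := by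
  have h := @norm_sq_eq_re_inner ℂ _ _ _ _ (rankOneProj u)
  rw [re_inner_rankOneProj, inner_self_eq_norm_sq_to_K, norm_pow, RCLike.norm_ofReal, abs_norm] at h
  exact (pow_left_inj₀ (norm_nonneg _) (by positivity) two_ne_zero).1 h

theorem norm_rankOneProj_sub_sq {u v : EuclideanSpace ℂ ι} (hu : ‖u‖ = 1) (hv : ‖v‖ = 1) :
    ‖rankOneProj u - rankOneProj v‖ ^ 2 = 2 * (1 - ‖⟪u, v⟫_ℂ‖ ^ 2) := by
  rw [@norm_sub_sq ℂ, norm_rankOneProj, norm_rankOneProj, hu, hv, re_inner_rankOneProj]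
  ring

end RankOneProj

section ProjectiveGeometry

theorem pratio_eq_wedgeRatio (x y : Pn n) : pratio x y = wedgeRatio x.rep y.rep := rfl

theorem pratio_comm (x y : Pn n) : pratio x y = pratio y x := wedgeRatio_comm _ _

theorem pratio_nonneg (x y : Pn n) : 0 ≤ pratio x y := by
  rw [pratio_eq_wedgeRatio, wedgeRatio]
  positivity

theorem pratio_mk_left {v : EuclideanSpace ℂ (Fin (n + 1))} (hv : v ≠ 0) (y : Pn n) :
    pratio (Projectivization.mk ℂ v hv) y = wedgeRatio v y.rep := by
  obtain ⟨a, ha⟩ := (Projectivization.mk_eq_mk_iff ℂ _ _ (Projectivization.rep_nonzero _) hv).1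
    (Projectivization.mk_rep (Projectivization.mk ℂ v hv))
  rw [pratio_eq_wedgeRatio, ← ha, Units.smul_def, wedgeRatio_smul_left a.ne_zero]

def unitRep (x : Pn n) : EuclideanSpace ℂ (Fin (n + 1)) := ((‖x.rep‖ : ℂ)⁻¹) • x.rep

theorem norm_unitRep (x : Pn n) : ‖unitRep x‖ = 1 := by
  rw [unitRep, norm_smul, norm_inv, Complex.norm_real, norm_norm,
    inv_mul_cancel₀ (norm_ne_zero_iff.2 x.rep_nonzero)]

theorem pratio_eq_sqrt (x y : Pn n) :
    pratio x y = √(1 - ‖⟪unitRep x, unitRep y⟫_ℂ‖ ^ 2) := by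
  have hc (z : Pn n) : ((‖z.rep‖ : ℂ))⁻¹ ≠ 0 := by simp [z.rep_nonzero]
  rw [← wedgeRatio_of_norm_eq_one (norm_unitRep x) (norm_unitRep y), unitRep, unitRep,
    wedgeRatio_smul_left (hc x), wedgeRatio_smul_right (hc y), pratio_eq_wedgeRatio]

theorem norm_rankOneProj_unitRep_sub (x y : Pn n) :
    ‖rankOneProj (unitRep x) - rankOneProj (unitRep y)‖ = √2 * pratio x y := by
  rw [pratio_eq_sqrt, ← Real.sqrt_mul zero_le_two,
    ← norm_rankOneProj_sub_sq (norm_unitRep x) (norm_unitRep y), Real.sqrt_sq (norm_nonneg _)]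

theorem pratio_triangle (x y z : Pn n) : pratio x z ≤ pratio x y + pratio y z := by
  have h := norm_sub_le_norm_sub_add_norm_sub (rankOneProj (unitRep x))
    (rankOneProj (unitRep y)) (rankOneProj (unitRep z))
  rw [norm_rankOneProj_unitRep_sub, norm_rankOneProj_unitRep_sub,
    norm_rankOneProj_unitRep_sub, ← mul_add] at h
  exact le_of_mul_le_mul_left h (by positivity)

theorem exists_finite_pratio_cover {ε : ℝ} (hε : 0 < ε) :
    ∃ F : Set (Pn n), F.Finite ∧ ∀ x, ∃ w ∈ F, pratio x w < ε := by
  set f : Pn n → EuclideanSpace ℂ (Fin (n + 1) × Fin (n + 1)) := fun x => rankOneProj (unitRep x)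
  have hbdd : TotallyBounded (f '' Set.univ) := by
    refine (isCompact_closedBall (0 : EuclideanSpace ℂ _) 1).totallyBounded.subset ?_
    rintro - ⟨x, -, rfl⟩
    simp [f, norm_rankOneProj, norm_unitRep]
  obtain ⟨F, -, hF, hcover⟩ := Set.exists_subset_image_finite_and.1
    (Metric.finite_approx_of_totallyBounded hbdd (√2 * ε) (by positivity))
  refine ⟨F, hF, fun x => ?_⟩
  obtain ⟨-, ⟨w, hw, rfl⟩, hxw⟩ :=
    Set.mem_iUnion₂.1 (hcover (Set.mem_image_of_mem f (Set.mem_univ x)))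
  rw [Metric.mem_ball, dist_eq_norm, norm_rankOneProj_unitRep_sub] at hxw
  exact ⟨w, hw, lt_of_mul_lt_mul_left hxw (by positivity)⟩

def projMk (v : {v : EuclideanSpace ℂ (Fin (n + 1)) // v ≠ 0}) : Pn n :=
  Projectivization.mk ℂ v.1 v.2

theorem isQuotientMap_projMk : IsQuotientMap (projMk (n := n)) := isQuotientMap_quot_mk

theorem isOpen_setOf_pratio_lt (y : Pn n) (c : ℝ) : IsOpen {x : Pn n | pratio x y < c} := by
  rw [← isQuotientMap_projMk.isOpen_preimage]
  convert (continuous_wedgeRatio_left y.rep_nonzero).isOpen_preimage _ isOpen_Iio using 1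
  ext v
  exact iff_of_eq (congrArg (· < c) (pratio_mk_left v.2 y))

theorem isOpenMap_projMk : IsOpenMap (projMk (n := n)) := by
  intro U hU
  rw [← isQuotientMap_projMk.isOpen_preimage]
  have hsat : projMk ⁻¹' (projMk '' U) =
      ⋃ a : ℂˣ, (fun v : {v : EuclideanSpace ℂ (Fin (n + 1)) // v ≠ 0} =>
        ⟨a • v.1, smul_ne_zero a.ne_zero v.2⟩) ⁻¹' U := by
    ext v
    simp only [Set.mem_preimage, Set.mem_image, Set.mem_iUnion]
    constructor
    · rintro ⟨⟨u, hu0⟩, hu, huv⟩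
      obtain ⟨a, rfl⟩ := (Projectivization.mk_eq_mk_iff ℂ u v.1 hu0 v.2).1 huv
      exact ⟨a, hu⟩
    · rintro ⟨a, ha⟩
      exact ⟨_, ha, (Projectivization.mk_eq_mk_iff ℂ _ v.1 _ v.2).2 ⟨a, rfl⟩⟩
  rw [hsat]
  exact isOpen_iUnion fun a => hU.preimage (by fun_prop)

instance : SecondCountableTopology (Pn n) :=
  TopologicalSpace.Quotient.secondCountableTopology
    (S := projectivizationSetoid ℂ (EuclideanSpace ℂ (Fin (n + 1)))) isOpenMap_projMk

end ProjectiveGeometry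

section Measures

theorem msupport_eq_support (μ : Measure (Pn n)) : msupport μ = μ.support := by
  simp only [msupport, Measure.support_eq_forall_isOpen, pos_iff_ne_zero]
  exact Set.ext fun x => ⟨fun h U hx hU => h U hU hx, fun h U hU hx => h U hx hU⟩

theorem measure_eq_measure_univ_of_msupport_subset {μ : Measure (Pn n)} {E : Set (Pn n)}
    (h : msupport μ ⊆ E) : μ E = μ Set.univ := by
  refine measure_congr (ae_eq_univ.2 (measure_mono_null (Set.compl_subset_compl.2 h) ?_))
  rw [msupport_eq_support]
  exact Measure.measure_compl_support

theorem msupport_smul_subset (c : ℝ≥0∞) (μ : Measure (Pn n)) :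
    msupport (c • μ) ⊆ msupport μ :=
  fun _ hx U hU hxU hμU => hx U hU hxU (by simp [hμU])

theorem mutEnergy_smul {c : ℝ≥0∞} (hc : c ≠ ∞) (μ : Measure (Pn n)) :
    mutEnergy (c • μ) (c • μ) = c ^ 2 * mutEnergy μ μ := by
  simp only [mutEnergy, lintegral_smul_measure, smul_eq_mul, lintegral_const_mul' c _ hc]
  ring

theorem exists_isProbabilityMeasure_eq_smul {ν : Measure (Pn n)} (h0 : ν Set.univ ≠ 0)
    (htop : ν Set.univ ≠ ∞) :
    ∃ μ : Measure (Pn n), IsProbabilityMeasure μ ∧ msupport μ ⊆ msupport ν ∧ ν = ν Set.univ • μ :=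
  ⟨(ν Set.univ)⁻¹ • ν, ⟨by simp [ENNReal.inv_mul_cancel h0 htop]⟩, msupport_smul_subset _ _,
    by rw [smul_smul, ENNReal.mul_inv_cancel h0 htop, one_smul]⟩

theorem log_two_le_negG {x y : Pn n} (h : pratio x y ≤ 1 / 2) :
    ENNReal.ofReal (Real.log 2) ≤ negG x y := by
  rw [negG]
  split_ifs with h0
  · exact le_top
  · refine ENNReal.ofReal_le_ofReal ?_
    have := Real.log_le_log ((pratio_nonneg x y).lt_of_ne' h0) h
    rw [one_div, Real.log_inv] at this
    linarith

theorem mul_measure_sq_le_mutEnergy {B : Set (Pn n)} (hB : MeasurableSet B) {c : ℝ≥0∞}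
    (hc : ∀ x ∈ B, ∀ y ∈ B, c ≤ negG x y) (ν : Measure (Pn n)) :
    c * ν B ^ 2 ≤ mutEnergy ν ν :=
  calc c * ν B ^ 2 = ∫⁻ _ in B, ∫⁻ _ in B, c ∂ν ∂ν := by simp; ring
    _ ≤ ∫⁻ x in B, ∫⁻ y in B, negG x y ∂ν ∂ν :=
      setLIntegral_mono' hB fun x hx => setLIntegral_mono' hB (hc x hx)
    _ ≤ mutEnergy ν ν :=
      (setLIntegral_le_lintegral _ _).trans (lintegral_mono fun x => setLIntegral_le_lintegral _ _)

theorem measure_univ_ne_top_of_mutEnergy_ne_top {ν : Measure (Pn n)}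
    (h : mutEnergy ν ν ≠ ∞) : ν Set.univ ≠ ∞ := by
  obtain ⟨F, hF, hcover⟩ := exists_finite_pratio_cover (n := n) (ε := 1 / 4) (by norm_num)
  set B : Pn n → Set (Pn n) := fun w => {x | pratio x w < 1 / 4}
  have hlog : ENNReal.ofReal (Real.log 2) ≠ 0 := by simp [Real.log_pos one_lt_two]
  have hB (w : Pn n) : ν (B w) ≠ ∞ := by
    have hsmall : ∀ x ∈ B w, ∀ y ∈ B w, ENNReal.ofReal (Real.log 2) ≤ negG x y :=
      fun x hx y hy => log_two_le_negG <| by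
        linarith [pratio_triangle x w y, pratio_comm w y, hx.out, hy.out]
    intro hBtop
    have := mul_measure_sq_le_mutEnergy (isOpen_setOf_pratio_lt w _).measurableSet hsmall ν
    rw [hBtop, top_pow two_ne_zero, mul_top hlog, top_le_iff] at this
    exact h this
  have hcov : Set.univ ⊆ ⋃ w ∈ F, B w := fun x _ =>
    let ⟨w, hw, hxw⟩ := hcover x
    Set.mem_biUnion hw hxw
  exact ne_top_of_le_ne_top (measure_biUnion_lt_top hF fun w _ => (hB w).lt_top).ne
    (measure_mono hcov)

end Measures

section Capacity

theorem robin_le_energy {E : Set (Pn n)} {μ : Measure (Pn n)} [hμ : IsProbabilityMeasure μ]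
    (h : msupport μ ⊆ E) : robin E ≤ energy μ :=
  iInf₂_le_of_le μ hμ (iInf_le _ h)

theorem robin_rpow_neg_half (E : Set (Pn n)) :
    robin E ^ (-(1 / 2 : ℝ)) =
      ⨆ (μ : Measure (Pn n)) (_ : IsProbabilityMeasure μ) (_ : msupport μ ⊆ E),
        energy μ ^ (-(1 / 2 : ℝ)) := by
  have key (x : ℝ≥0∞) : x ^ (-(1 / 2 : ℝ)) = (ENNReal.orderIsoRpow (1 / 2) one_half_pos x)⁻¹ := by
    rw [ENNReal.orderIsoRpow_apply, ← ENNReal.rpow_neg]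
  simp_rw [key, robin, OrderIso.map_iInf, ENNReal.inv_iInf]

theorem ENNReal.sq_mul_le_one_iff_le_rpow_neg_half (m e : ℝ≥0∞) :
    m ^ 2 * e ≤ 1 ↔ m ≤ e ^ (-(1 / 2 : ℝ)) := by
  have hsq : m ^ 2 * e = (m * e ^ (1 / 2 : ℝ)) ^ 2 := by
    rw [mul_pow, ← ENNReal.rpow_natCast (e ^ _), ← ENNReal.rpow_mul]
    norm_num
  rw [ENNReal.rpow_neg, ENNReal.le_inv_iff_mul_le, hsq, pow_le_one_iff two_ne_zero]

theorem rpow_neg_half_energy_le_iSup {E : Set (Pn n)} {μ : Measure (Pn n)}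
    [IsProbabilityMeasure μ] (h : msupport μ ⊆ E) :
    energy μ ^ (-(1 / 2 : ℝ)) ≤
      ⨆ (ν : Measure (Pn n)) (_ : msupport ν ⊆ E) (_ : mutEnergy ν ν ≤ 1), ν E := by
  refine ENNReal.le_of_forall_nnreal_lt fun r hr => ?_
  have hν : mutEnergy ((r : ℝ≥0∞) • μ) ((r : ℝ≥0∞) • μ) ≤ 1 := by
    rw [mutEnergy_smul ENNReal.coe_ne_top]
    exact (ENNReal.sq_mul_le_one_iff_le_rpow_neg_half _ _).2 hr.le
  have hmass : ((r : ℝ≥0∞) • μ) E = r := by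
    simp [measure_eq_measure_univ_of_msupport_subset h]
  rw [← hmass]
  exact le_iSup₂_of_le _ ((msupport_smul_subset _ _).trans h) (le_iSup_of_le hν le_rfl)

theorem measure_le_robin_rpow_neg_half {E : Set (Pn n)} {ν : Measure (Pn n)}
    (h : msupport ν ⊆ E) (hν : mutEnergy ν ν ≤ 1) : ν E ≤ robin E ^ (-(1 / 2 : ℝ)) := by
  rw [measure_eq_measure_univ_of_msupport_subset h]
  rcases eq_or_ne (ν Set.univ) 0 with h0 | h0
  · simp [h0]
  have htop := measure_univ_ne_top_of_mutEnergy_ne_top (hν.trans_lt one_lt_top).ne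
  obtain ⟨μ, hμ, hμν, hνμ⟩ := exists_isProbabilityMeasure_eq_smul h0 htop
  rw [← ENNReal.sq_mul_le_one_iff_le_rpow_neg_half]
  calc ν Set.univ ^ 2 * robin E ≤ ν Set.univ ^ 2 * mutEnergy μ μ := by
        gcongr; exact robin_le_energy (hμν.trans h)
    _ = mutEnergy ν ν := by rw [← mutEnergy_smul htop, ← hνμ]
    _ ≤ 1 := hν

theorem isPolar_iff_forall_measure_eq_zero {E : Set (Pn n)} :
    IsPolar E ↔ ∀ ν : Measure (Pn n), mutEnergy ν ν ≠ ∞ → msupport ν ⊆ E → ν E = 0 := by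
  constructor
  · intro hE ν hν h
    rw [measure_eq_measure_univ_of_msupport_subset h]
    by_contra h0
    have htop := measure_univ_ne_top_of_mutEnergy_ne_top hν
    obtain ⟨μ, hμ, hμν, hνμ⟩ := exists_isProbabilityMeasure_eq_smul h0 htop
    have hμ_top : mutEnergy μ μ = ∞ := hE μ hμ (hμν.trans h)
    rw [hνμ, mutEnergy_smul htop, hμ_top, mul_top (pow_ne_zero 2 h0)] at hν
    exact hν rfl
  · intro hE μ _ h
    by_contra hμ
    have := hE μ hμ h
    rw [measure_eq_measure_univ_of_msupport_subset h, measure_univ] at this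
    exact one_ne_zero this

end Capacity

theorem statement6_general (n : ℕ) (E : Set (Pn n)) :
    (robin E ^ (-(1 / 2 : ℝ)) =
      ⨆ (ν : Measure (Pn n)) (_ : msupport ν ⊆ E) (_ : mutEnergy ν ν ≤ 1), ν E) ∧
    (IsPolar E ↔
      ∀ ν : Measure (Pn n), mutEnergy ν ν ≠ ∞ → msupport ν ⊆ E → ν E = 0) := by
  refine ⟨le_antisymm ?_ ?_, isPolar_iff_forall_measure_eq_zero⟩
  · rw [robin_rpow_neg_half]
    exact iSup₂_le fun μ _ => iSup_le fun h => rpow_neg_half_energy_le_iSup h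
  · exact iSup₂_le fun ν h => iSup_le fun hν => measure_le_robin_rpow_neg_half h hν

theorem statement6 (n : ℕ) (E : Set (Pn n)) (hE : MeasurableSet E) :
    (robin E ^ (-(1 / 2 : ℝ)) =
      ⨆ (ν : Measure (Pn n)) (_ : msupport ν ⊆ E) (_ : mutEnergy ν ν ≤ 1), ν E) ∧
    (IsPolar E ↔
      ∀ ν : Measure (Pn n), mutEnergy ν ν ≠ ∞ → msupport ν ⊆ E → ν E = 0) :=
  statement6_general n E

end
end

section
/- Let K ⊆ ℙ^n be a compact set. Then the sequence of Chebyshev quantities (M_s(K))_{s≥1} converges in [0,+∞]; in particular liminf_{s→∞} M_s(K) = limsup_{s→∞} M_s(K). -/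
open MeasureTheory Filter Topology ENNReal

noncomputable section

variable {n : ℕ}

/-- The Chebyshev quantity of order s,
M_s(K) = sup_{ζ₁,…,ζ_s ∈ K} inf_{ζ ∈ K} (1/s) Σ_j (−G(ζ,ζ_j)). -/
def cheb (s : ℕ) (K : Set (Pn n)) : ℝ≥0∞ :=
  ⨆ (ζ : Fin s → Pn n) (_ : ∀ j, ζ j ∈ K),
    ⨅ (z : Pn n) (_ : z ∈ K), ((s : ℝ≥0∞))⁻¹ * ∑ j : Fin s, negG z (ζ j)

/-! The unnormalised quantity `s • M_s(K) = chebSum negG K s` is superadditive in `s`: on a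
concatenated tuple the kernel sum splits, and the infimum of a sum dominates the sum of the
infima. Fekete's lemma, valid in `ℝ≥0∞`, then gives `M_s(K) → sup_m M_m(K)`. -/

theorem ENNReal.tendsto_natCast_div_div_natCast_atTop {m : ℕ} (hm : m ≠ 0) :
    Tendsto (fun s : ℕ => ((s / m : ℕ) : ℝ≥0∞) / s) atTop (𝓝 (m : ℝ≥0∞)⁻¹) := by
  have hreal : Tendsto (fun s : ℕ => ((⌊(m : ℝ)⁻¹ * s⌋₊ : ℕ) : ℝ) / s) atTop (𝓝 (m : ℝ)⁻¹) :=
    (tendsto_nat_floor_mul_div_atTop (by positivity)).comp tendsto_natCast_atTop_atTop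
  have hennreal := ENNReal.tendsto_ofReal hreal
  rw [ENNReal.ofReal_inv_of_pos (by positivity), ENNReal.ofReal_natCast] at hennreal
  refine hennreal.congr' <| (eventually_ne_atTop 0).mono fun s hs => ?_
  rw [inv_mul_eq_div, Nat.floor_div_eq_div, ENNReal.ofReal_div_of_pos (by positivity),
    ENNReal.ofReal_natCast, ENNReal.ofReal_natCast]

theorem ENNReal.tendsto_inv_mul_of_superadditive {A : ℕ → ℝ≥0∞} (h0 : A 0 = 0)
    (hA : ∀ s t, A s + A t ≤ A (s + t)) :
    Tendsto (fun s : ℕ => (s : ℝ≥0∞)⁻¹ * A s) atTop (𝓝 (⨆ m : ℕ, (m : ℝ≥0∞)⁻¹ * A m)) := by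
  have hmono (s t : ℕ) : A s ≤ A (s + t) := le_self_add.trans (hA s t)
  have hnsmul (q m : ℕ) : (q : ℝ≥0∞) * A m ≤ A (q * m) := by
    induction q with
    | zero => simp [h0]
    | succ q ih =>
      calc ((q + 1 : ℕ) : ℝ≥0∞) * A m = q * A m + A m := by push_cast; ring
        _ ≤ A (q * m) + A m := by gcongr
        _ ≤ A ((q + 1) * m) := by rw [add_mul, one_mul]; exact hA _ _
  have hlower (m : ℕ) : (m : ℝ≥0∞)⁻¹ * A m ≤ liminf (fun s : ℕ => (s : ℝ≥0∞)⁻¹ * A s) atTop := by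
    rcases eq_or_ne m 0 with rfl | hm
    · simp [h0]
    have hlim := ENNReal.Tendsto.mul_const (b := A m)
      (ENNReal.tendsto_natCast_div_div_natCast_atTop hm) (.inl (by simp))
    rw [← hlim.liminf_eq]
    refine liminf_le_liminf (Eventually.of_forall fun s => ?_)
    calc ((s / m : ℕ) : ℝ≥0∞) / s * A m = (s : ℝ≥0∞)⁻¹ * ((s / m : ℕ) * A m) := by
          rw [div_eq_mul_inv]; ring
      _ ≤ (s : ℝ≥0∞)⁻¹ * A s := by
          gcongr
          calc ((s / m : ℕ) : ℝ≥0∞) * A m ≤ A (s / m * m) := hnsmul _ _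
            _ ≤ A s := by simpa only [Nat.div_add_mod'] using hmono (s / m * m) (s % m)
  refine tendsto_of_le_liminf_of_limsup_le (iSup_le hlower) ?_
  exact limsup_le_of_le (by isBoundedDefault) (Eventually.of_forall
    fun s => le_iSup (fun m : ℕ => (m : ℝ≥0∞)⁻¹ * A m) s)

def chebSum {X : Type*} (k : X → X → ℝ≥0∞) (K : Set X) (s : ℕ) : ℝ≥0∞ :=
  ⨆ (ζ : Fin s → X) (_ : ∀ j, ζ j ∈ K), ⨅ (z : X) (_ : z ∈ K), ∑ j, k z (ζ j)

section chebSum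

variable {X : Type*} (k : X → X → ℝ≥0∞) {K : Set X}

theorem chebSum_zero (hK : K.Nonempty) : chebSum k K 0 = 0 := by
  obtain ⟨z, hz⟩ := hK
  refine le_antisymm (iSup₂_le fun ζ _ => ?_) zero_le
  simpa using iInf₂_le (f := fun z (_ : z ∈ K) => ∑ j, k z (ζ j)) z hz

theorem chebSum_empty {s : ℕ} (hs : s ≠ 0) : chebSum k ∅ s = 0 := by
  have : Nonempty (Fin s) := ⟨⟨0, Nat.pos_of_ne_zero hs⟩⟩
  simp [chebSum]

theorem chebSum_add_le (hK : K.Nonempty) (s t : ℕ) :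
    chebSum k K s + chebSum k K t ≤ chebSum k K (s + t) := by
  obtain ⟨z₀, hz₀⟩ := hK
  refine ENNReal.biSup_add_biSup_le' ⟨fun _ => z₀, fun _ => hz₀⟩ ⟨fun _ => z₀, fun _ => hz₀⟩
    fun ζ hζ η hη => ?_
  have hmem : ∀ j, Fin.append ζ η j ∈ K := Fin.addCases (by simpa using hζ) (by simpa using hη)
  refine le_iSup₂_of_le (Fin.append ζ η) hmem (le_iInf₂ fun z hz => ?_)
  rw [Fin.sum_univ_add]
  simp only [Fin.append_left, Fin.append_right]
  exact add_le_add (iInf₂_le z hz) (iInf₂_le z hz)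

end chebSum

theorem cheb_eq_inv_mul_chebSum {s : ℕ} (hs : s ≠ 0) (K : Set (Pn n)) :
    cheb s K = (s : ℝ≥0∞)⁻¹ * chebSum negG K s := by
  simp_rw [cheb, chebSum, ENNReal.mul_iSup,
    ENNReal.mul_iInf_of_ne (ENNReal.inv_ne_zero.2 (natCast_ne_top s)) (by simp [hs])]

theorem statement17_general (n : ℕ) (K : Set (Pn n)) :
    (∃ L : ℝ≥0∞, Tendsto (fun s => cheb s K) atTop (𝓝 L)) ∧
    liminf (fun s => cheb s K) atTop = limsup (fun s => cheb s K) atTop := by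
  suffices ∃ L, Tendsto (fun s : ℕ => (s : ℝ≥0∞)⁻¹ * chebSum negG K s) atTop (𝓝 L) by
    obtain ⟨L, hL⟩ := this
    have hcheb : Tendsto (fun s => cheb s K) atTop (𝓝 L) :=
      hL.congr' <| (eventually_ne_atTop 0).mono fun s hs => (cheb_eq_inv_mul_chebSum hs K).symm
    exact ⟨⟨L, hcheb⟩, hcheb.liminf_eq.trans hcheb.limsup_eq.symm⟩
  rcases K.eq_empty_or_nonempty with rfl | hK
  · refine ⟨0, tendsto_const_nhds.congr' <| (eventually_ne_atTop 0).mono fun s hs => ?_⟩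
    simp [chebSum_empty _ hs]
  · exact ⟨_, ENNReal.tendsto_inv_mul_of_superadditive (chebSum_zero _ hK) (chebSum_add_le _ hK)⟩

theorem statement17 (n : ℕ) (K : Set (Pn n)) (hK : IsCompact K) :
    (∃ L : ℝ≥0∞, Tendsto (fun s => cheb s K) atTop (𝓝 L)) ∧
    liminf (fun s => cheb s K) atTop = limsup (fun s => cheb s K) atTop :=
  statement17_general n K
end
end
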